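/- Let f, ξ, η, ζ be C^∞ on an open set D ⊆ ℝ² and satisfy the infinitesimal-flex equations ξ_u = −f_u ζ_u, ξ_v + η_u = −f_v ζ_u − f_u ζ_v, η_v = −f_v ζ_v on D. For t ∈ ℝ define φ_t(u,v) = (u + tξ(u,v), v + tη(u,v), f(u,v) + tζ(u,v)) and let h(u,v,t) = (E·N − 2F·M + G·L)/√(EG − F²) be the mean curvature density of φ_t, where E = φ_u·φ_u, F = φ_u·φ_v, G = φ_v·φ_v, n = (φ_u × φ_v)/‖φ_u × φ_v‖, L = φ_uu·n, M = φ_uv·n, N = φ_vv·n (all evaluated at (u,v,t)). Then for each (u,v) ∈ D the function t ↦ h(u,v,t) is differentiable at t = 0 and ∂h/∂t(u,v,0) = (1 + f_v²)ζ_uu − 2 f_u f_v ζ_uv + (1 + f_u²)ζ_vv. -/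

import Mathlib

noncomputable section
open scoped RealInnerProductSpace

/-- ℝ³ with the Euclidean norm and scalar product. -/
abbrev E3 := EuclideanSpace ℝ (Fin 3)

/-- The vector (a, b, c) ∈ ℝ³. -/
def vec3 (a b c : ℝ) : E3 := (WithLp.equiv 2 (Fin 3 → ℝ)).symm ![a, b, c]

/-- The cross product in ℝ³. -/
def cross3 (x y : E3) : E3 :=
  vec3 (x 1 * y 2 - x 2 * y 1) (x 2 * y 0 - x 0 * y 2) (x 0 * y 1 - x 1 * y 0)

/-- Partial derivative in the first variable `u`. -/
def pu {F : Type*} [NormedAddCommGroup F] [NormedSpace ℝ F] (g : ℝ × ℝ → F) (z : ℝ × ℝ) : F :=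
  fderiv ℝ g z (1, 0)

/-- Partial derivative in the second variable `v`. -/
def pv {F : Type*} [NormedAddCommGroup F] [NormedSpace ℝ F] (g : ℝ × ℝ → F) (z : ℝ × ℝ) : F :=
  fderiv ℝ g z (0, 1)

/-- The infinitesimal-flex equations (3): ξ_u = −f_u ζ_u,
ξ_v + η_u = −f_v ζ_u − f_u ζ_v, η_v = −f_v ζ_v. -/
def FlexEqns (f ξ η ζ : ℝ × ℝ → ℝ) (z : ℝ × ℝ) : Prop :=
  pu ξ z = -(pu f z * pu ζ z) ∧
  pv ξ z + pu η z = -(pv f z * pu ζ z) - pu f z * pv ζ z ∧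
  pv η z = -(pv f z * pv ζ z)

/-! ### Auxiliary lemmas -/

lemma vec3_apply (a b c : ℝ) (i : Fin 3) : vec3 a b c i = ![a,b,c] i := rfl

lemma vec3_decomp (a b c : ℝ) :
    vec3 a b c = a • vec3 1 0 0 + b • vec3 0 1 0 + c • vec3 0 0 1 := by
  ext i
  fin_cases i <;>
    simp [vec3_apply, PiLp.add_apply, PiLp.smul_apply]

lemma inner_vec3 (a b c d e g : ℝ) :
    ⟪vec3 a b c, vec3 d e g⟫ = a*d + b*e + c*g := by
  simp [PiLp.inner_apply, Fin.sum_univ_three, vec3_apply, RCLike.inner_apply]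
  ring

lemma cross3_vec3 (a b c d e g : ℝ) :
    cross3 (vec3 a b c) (vec3 d e g) = vec3 (b*g - c*e) (c*d - a*g) (a*e - b*d) := rfl

lemma norm_vec3 (a b c : ℝ) : ‖vec3 a b c‖ = Real.sqrt (a^2 + b^2 + c^2) := by
  rw [show ‖vec3 a b c‖ = Real.sqrt ⟪vec3 a b c, vec3 a b c⟫ by
        rw [real_inner_self_eq_norm_sq, Real.sqrt_sq (norm_nonneg _)],
      inner_vec3]
  ring_nf

lemma pu_vec3 {g1 g2 g3 : ℝ × ℝ → ℝ} {L1 L2 L3 : ℝ × ℝ →L[ℝ] ℝ} {q : ℝ × ℝ}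
    (h1 : HasFDerivAt g1 L1 q) (h2 : HasFDerivAt g2 L2 q) (h3 : HasFDerivAt g3 L3 q) :
    pu (fun w => vec3 (g1 w) (g2 w) (g3 w)) q = vec3 (L1 (1,0)) (L2 (1,0)) (L3 (1,0)) := by
  have H : HasFDerivAt (fun w => vec3 (g1 w) (g2 w) (g3 w))
      ((L1.smulRight (vec3 1 0 0) + L2.smulRight (vec3 0 1 0)) + L3.smulRight (vec3 0 0 1)) q := by
    have := ((h1.smul_const (vec3 1 0 0)).add (h2.smul_const (vec3 0 1 0))).add
      (h3.smul_const (vec3 0 0 1))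
    simpa only [Pi.add_def, ← vec3_decomp] using this
  rw [pu, H.fderiv]
  simp only [ContinuousLinearMap.add_apply, ContinuousLinearMap.smulRight_apply]
  rw [← vec3_decomp]

lemma pv_vec3 {g1 g2 g3 : ℝ × ℝ → ℝ} {L1 L2 L3 : ℝ × ℝ →L[ℝ] ℝ} {q : ℝ × ℝ}
    (h1 : HasFDerivAt g1 L1 q) (h2 : HasFDerivAt g2 L2 q) (h3 : HasFDerivAt g3 L3 q) :
    pv (fun w => vec3 (g1 w) (g2 w) (g3 w)) q = vec3 (L1 (0,1)) (L2 (0,1)) (L3 (0,1)) := by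
  have H : HasFDerivAt (fun w => vec3 (g1 w) (g2 w) (g3 w))
      ((L1.smulRight (vec3 1 0 0) + L2.smulRight (vec3 0 1 0)) + L3.smulRight (vec3 0 0 1)) q := by
    have := ((h1.smul_const (vec3 1 0 0)).add (h2.smul_const (vec3 0 1 0))).add
      (h3.smul_const (vec3 0 0 1))
    simpa only [Pi.add_def, ← vec3_decomp] using this
  rw [pv, H.fderiv]
  simp only [ContinuousLinearMap.add_apply, ContinuousLinearMap.smulRight_apply]
  rw [← vec3_decomp]

section DiffHelpers

variable {D : Set (ℝ × ℝ)} {g : ℝ × ℝ → ℝ} {z : ℝ × ℝ}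

lemma diffAt_of_cd (hD : IsOpen D) (hg : ContDiffOn ℝ (⊤ : ℕ∞) g D) (hz : z ∈ D) :
    DifferentiableAt ℝ g z :=
  (hg.contDiffAt (hD.mem_nhds hz)).differentiableAt (by simp)

lemma diffAt_fderiv (hD : IsOpen D) (hg : ContDiffOn ℝ (⊤ : ℕ∞) g D) (hz : z ∈ D) :
    DifferentiableAt ℝ (fderiv ℝ g) z :=
  ((hg.fderiv_of_isOpen hD (m := 1) (WithTop.coe_le_coe.mpr le_top)).contDiffAt (hD.mem_nhds hz)).differentiableAt one_ne_zero

lemma hasFDerivAt_pu (hD : IsOpen D) (hg : ContDiffOn ℝ (⊤ : ℕ∞) g D) (hz : z ∈ D) :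
    HasFDerivAt (pu g) ((fderiv ℝ (fderiv ℝ g) z).flip ((1:ℝ),(0:ℝ))) z := by
  have h := (diffAt_fderiv hD hg hz).hasFDerivAt.clm_apply
    (hasFDerivAt_const ((1:ℝ),(0:ℝ)) z)
  simp only [ContinuousLinearMap.comp_zero, zero_add] at h
  exact h

lemma hasFDerivAt_pv (hD : IsOpen D) (hg : ContDiffOn ℝ (⊤ : ℕ∞) g D) (hz : z ∈ D) :
    HasFDerivAt (pv g) ((fderiv ℝ (fderiv ℝ g) z).flip ((0:ℝ),(1:ℝ))) z := by
  have h := (diffAt_fderiv hD hg hz).hasFDerivAt.clm_apply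
    (hasFDerivAt_const ((0:ℝ),(1:ℝ)) z)
  simp only [ContinuousLinearMap.comp_zero, zero_add] at h
  exact h

lemma diffAt_pu (hD : IsOpen D) (hg : ContDiffOn ℝ (⊤ : ℕ∞) g D) (hz : z ∈ D) :
    DifferentiableAt ℝ (pu g) z := (hasFDerivAt_pu hD hg hz).differentiableAt

lemma diffAt_pv (hD : IsOpen D) (hg : ContDiffOn ℝ (⊤ : ℕ∞) g D) (hz : z ∈ D) :
    DifferentiableAt ℝ (pv g) z := (hasFDerivAt_pv hD hg hz).differentiableAt

lemma mixed_symm (hD : IsOpen D) (hg : ContDiffOn ℝ (⊤ : ℕ∞) g D) (hz : z ∈ D) :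
    pu (pv g) z = pv (pu g) z := by
  have hs := (hg.contDiffAt (hD.mem_nhds hz)).isSymmSndFDerivAt (by simp only [minSmoothness_of_isRCLikeNormedField]; exact WithTop.coe_le_coe.mpr le_top)
  rw [pu, (hasFDerivAt_pv hD hg hz).fderiv, pv, (hasFDerivAt_pu hD hg hz).fderiv]
  simp only [ContinuousLinearMap.flip_apply]
  exact hs _ _

end DiffHelpers

lemma pu_congr {F : Type*} [NormedAddCommGroup F] [NormedSpace ℝ F]
    {g1 g2 : ℝ × ℝ → F} {z : ℝ × ℝ} (h : g1 =ᶠ[nhds z] g2) : pu g1 z = pu g2 z := by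
  rw [pu, pu, h.fderiv_eq]

lemma pv_congr {F : Type*} [NormedAddCommGroup F] [NormedSpace ℝ F]
    {g1 g2 : ℝ × ℝ → F} {z : ℝ × ℝ} (h : g1 =ᶠ[nhds z] g2) : pv g1 z = pv g2 z := by
  rw [pv, pv, h.fderiv_eq]

lemma pu_neg_mul {a b : ℝ × ℝ → ℝ} {z : ℝ × ℝ}
    (ha : DifferentiableAt ℝ a z) (hb : DifferentiableAt ℝ b z) :
    pu (fun w => -(a w * b w)) z = -(pu a z * b z + a z * pu b z) := by
  have h := (ha.hasFDerivAt.mul hb.hasFDerivAt).neg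
  rw [pu, show (fun w => -(a w * b w)) = -(a * b) from rfl, h.fderiv]
  simp [pu]
  ring

lemma pv_neg_mul {a b : ℝ × ℝ → ℝ} {z : ℝ × ℝ}
    (ha : DifferentiableAt ℝ a z) (hb : DifferentiableAt ℝ b z) :
    pv (fun w => -(a w * b w)) z = -(pv a z * b z + a z * pv b z) := by
  have h := (ha.hasFDerivAt.mul hb.hasFDerivAt).neg
  rw [pv, show (fun w => -(a w * b w)) = -(a * b) from rfl, h.fderiv]
  simp [pv]
  ring

lemma pu_neg_mul_sub {a b c d : ℝ × ℝ → ℝ} {z : ℝ × ℝ}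
    (ha : DifferentiableAt ℝ a z) (hb : DifferentiableAt ℝ b z)
    (hc : DifferentiableAt ℝ c z) (hd : DifferentiableAt ℝ d z) :
    pu (fun w => -(a w * b w) - c w * d w) z
      = -(pu a z * b z + a z * pu b z) - (pu c z * d z + c z * pu d z) := by
  have h := (ha.hasFDerivAt.mul hb.hasFDerivAt).neg.sub (hc.hasFDerivAt.mul hd.hasFDerivAt)
  rw [pu, show (fun w => -(a w * b w) - c w * d w) = -(a * b) - c * d from rfl, h.fderiv]
  simp [pu]
  ring

lemma pv_neg_mul_sub {a b c d : ℝ × ℝ → ℝ} {z : ℝ × ℝ}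
    (ha : DifferentiableAt ℝ a z) (hb : DifferentiableAt ℝ b z)
    (hc : DifferentiableAt ℝ c z) (hd : DifferentiableAt ℝ d z) :
    pv (fun w => -(a w * b w) - c w * d w) z
      = -(pv a z * b z + a z * pv b z) - (pv c z * d z + c z * pv d z) := by
  have h := (ha.hasFDerivAt.mul hb.hasFDerivAt).neg.sub (hc.hasFDerivAt.mul hd.hasFDerivAt)
  rw [pv, show (fun w => -(a w * b w) - c w * d w) = -(a * b) - c * d from rfl, h.fderiv]
  simp [pv]
  ring

lemma pu_add' {a b : ℝ × ℝ → ℝ} {z : ℝ × ℝ}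
    (ha : DifferentiableAt ℝ a z) (hb : DifferentiableAt ℝ b z) :
    pu (fun w => a w + b w) z = pu a z + pu b z := by
  have h := ha.hasFDerivAt.add hb.hasFDerivAt
  rw [pu, show (fun w => a w + b w) = a + b from rfl, h.fderiv]
  simp [pu]

lemma pv_add' {a b : ℝ × ℝ → ℝ} {z : ℝ × ℝ}
    (ha : DifferentiableAt ℝ a z) (hb : DifferentiableAt ℝ b z) :
    pv (fun w => a w + b w) z = pv a z + pv b z := by
  have h := ha.hasFDerivAt.add hb.hasFDerivAt
  rw [pv, show (fun w => a w + b w) = a + b from rfl, h.fderiv]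
  simp [pv]

lemma poly5 (a0 a1 a2 a3 a4 a5 : ℝ) :
    HasDerivAt (fun t : ℝ => a0 + a1 * t + a2 * t^2 + a3 * t^3 + a4 * t^4 + a5 * t^5) a1 0 := by
  have h : HasDerivAt (fun t : ℝ => a0 + a1 * t + a2 * t^2 + a3 * t^3 + a4 * t^4 + a5 * t^5)
      (0 + a1 * 1 + a2 * (↑2 * 0 ^ 1) + a3 * (↑3 * 0 ^ 2) + a4 * (↑4 * 0 ^ 3) + a5 * (↑5 * 0 ^ 4))
      0 := by
    exact (((((hasDerivAt_const 0 a0).add ((hasDerivAt_id 0).const_mul a1)).add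
      ((hasDerivAt_pow 2 0).const_mul a2)).add ((hasDerivAt_pow 3 0).const_mul a3)).add
      ((hasDerivAt_pow 4 0).const_mul a4)).add ((hasDerivAt_pow 5 0).const_mul a5)
  convert h using 1
  norm_num

lemma poly_even (b0 b2 b4 : ℝ) :
    HasDerivAt (fun t : ℝ => b0 + b2 * t^2 + b4 * t^4) 0 0 := by
  have h : HasDerivAt (fun t : ℝ => b0 + b2 * t^2 + b4 * t^4)
      (0 + b2 * (↑2 * 0 ^ 1) + b4 * (↑4 * 0 ^ 3)) 0 := by
    exact ((hasDerivAt_const 0 b0).add ((hasDerivAt_pow 2 0).const_mul b2)).add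
      ((hasDerivAt_pow 4 0).const_mul b4)
  convert h using 1
  norm_num

lemma deriv_ratio (a0 a1 a2 a3 a4 a5 b0 b2 b4 V : ℝ) (hb : b0 ≠ 0) (hV : V = a1 / b0) :
    HasDerivAt (fun t : ℝ => (a0 + a1*t + a2*t^2 + a3*t^3 + a4*t^4 + a5*t^5) /
      (b0 + b2*t^2 + b4*t^4)) V 0 := by
  have h1 := poly5 a0 a1 a2 a3 a4 a5
  have h2 := poly_even b0 b2 b4
  have hne : ((fun t : ℝ => b0 + b2*t^2 + b4*t^4) 0) ≠ 0 := by simpa using hb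
  have h3 := h1.div h2 hne
  refine h3.congr_deriv ?_
  rw [hV]
  field_simp
  ring_nf
  field_simp

/-- The mean curvature density as a rational expression in the components. -/
lemma mean_curv_formula (A1 A2 A3 B1 B2 B3 R1 R2 R3 S1 S2 S3 T1 T2 T3 : ℝ) :
    (⟪vec3 A1 A2 A3, vec3 A1 A2 A3⟫ *
        ⟪vec3 T1 T2 T3, ‖cross3 (vec3 A1 A2 A3) (vec3 B1 B2 B3)‖⁻¹ •
            cross3 (vec3 A1 A2 A3) (vec3 B1 B2 B3)⟫
      - 2 * ⟪vec3 A1 A2 A3, vec3 B1 B2 B3⟫ *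
        ⟪vec3 S1 S2 S3, ‖cross3 (vec3 A1 A2 A3) (vec3 B1 B2 B3)‖⁻¹ •
            cross3 (vec3 A1 A2 A3) (vec3 B1 B2 B3)⟫
      + ⟪vec3 B1 B2 B3, vec3 B1 B2 B3⟫ *
        ⟪vec3 R1 R2 R3, ‖cross3 (vec3 A1 A2 A3) (vec3 B1 B2 B3)‖⁻¹ •
            cross3 (vec3 A1 A2 A3) (vec3 B1 B2 B3)⟫)
    / Real.sqrt (⟪vec3 A1 A2 A3, vec3 A1 A2 A3⟫ * ⟪vec3 B1 B2 B3, vec3 B1 B2 B3⟫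
        - ⟪vec3 A1 A2 A3, vec3 B1 B2 B3⟫ ^ 2)
    =
    ((A1*A1 + A2*A2 + A3*A3) *
        (T1*(A2*B3 - A3*B2) + T2*(A3*B1 - A1*B3) + T3*(A1*B2 - A2*B1))
      - 2 * (A1*B1 + A2*B2 + A3*B3) *
        (S1*(A2*B3 - A3*B2) + S2*(A3*B1 - A1*B3) + S3*(A1*B2 - A2*B1))
      + (B1*B1 + B2*B2 + B3*B3) *
        (R1*(A2*B3 - A3*B2) + R2*(A3*B1 - A1*B3) + R3*(A1*B2 - A2*B1)))
    / ((A1*A1 + A2*A2 + A3*A3) * (B1*B1 + B2*B2 + B3*B3) - (A1*B1 + A2*B2 + A3*B3)^2) := by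
  set C1 := A2*B3 - A3*B2 with hC1
  set C2 := A3*B1 - A1*B3 with hC2
  set C3 := A1*B2 - A2*B1 with hC3
  rw [cross3_vec3, norm_vec3]
  rw [inner_vec3, inner_vec3, inner_vec3]
  rw [real_inner_smul_right, real_inner_smul_right, real_inner_smul_right]
  rw [inner_vec3, inner_vec3, inner_vec3]
  rw [show (A1*A1 + A2*A2 + A3*A3) * (B1*B1 + B2*B2 + B3*B3) - (A1*B1 + A2*B2 + A3*B3)^2
      = C1^2 + C2^2 + C3^2 by rw [hC1, hC2, hC3]; ring]
  set x := Real.sqrt (C1^2 + C2^2 + C3^2) with hx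
  have hxx : x * x = C1^2 + C2^2 + C3^2 := Real.mul_self_sqrt (by positivity)
  rcases eq_or_ne x 0 with h0 | h0
  · rw [← hxx, h0]
    simp
  · rw [← hxx]
    field_simp
    simp only [hC1, hC2, hC3]
    ring

set_option maxHeartbeats 4000000 in
set_option maxRecDepth 16000 in
/-- for a smooth infinitesimal flex (ξ,η,ζ) of the graph of f, the
mean curvature density h(u,v,t) = (E·N − 2F·M + G·L)/√(EG − F²) of the deformed
surface φ_t(u,v) = (u+tξ, v+tη, f+tζ) is differentiable in t at t = 0 with
∂h/∂t(u,v,0) = (1+f_v²)ζ_uu − 2f_u f_v ζ_uv + (1+f_u²)ζ_vv. -/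
theorem stmt4 (D : Set (ℝ × ℝ)) (hD : IsOpen D)
    (f ξ η ζ : ℝ × ℝ → ℝ)
    (hf : ContDiffOn ℝ (⊤ : ℕ∞) f D) (hξ : ContDiffOn ℝ (⊤ : ℕ∞) ξ D)
    (hη : ContDiffOn ℝ (⊤ : ℕ∞) η D) (hζ : ContDiffOn ℝ (⊤ : ℕ∞) ζ D)
    (hflex : ∀ z ∈ D, FlexEqns f ξ η ζ z)
    (φ : ℝ → ℝ × ℝ → E3)
    (hφ : φ = fun t q => vec3 (q.1 + t * ξ q) (q.2 + t * η q) (f q + t * ζ q))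
    (n : ℝ → ℝ × ℝ → E3)
    (hn : n = fun t q =>
      ‖cross3 (pu (φ t) q) (pv (φ t) q)‖⁻¹ • cross3 (pu (φ t) q) (pv (φ t) q))
    (h : ℝ × ℝ → ℝ → ℝ)
    (hh : h = fun q t =>
      (⟪pu (φ t) q, pu (φ t) q⟫ * ⟪pv (pv (φ t)) q, n t q⟫
        - 2 * ⟪pu (φ t) q, pv (φ t) q⟫ * ⟪pv (pu (φ t)) q, n t q⟫
        + ⟪pv (φ t) q, pv (φ t) q⟫ * ⟪pu (pu (φ t)) q, n t q⟫)
      / Real.sqrt (⟪pu (φ t) q, pu (φ t) q⟫ * ⟪pv (φ t) q, pv (φ t) q⟫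
          - ⟪pu (φ t) q, pv (φ t) q⟫ ^ 2)) :
    ∀ z ∈ D, HasDerivAt (fun t => h z t)
      ((1 + pv f z ^ 2) * pu (pu ζ) z - 2 * pu f z * pv f z * pv (pu ζ) z
        + (1 + pu f z ^ 2) * pv (pv ζ) z) 0 := by
  intro z hz
  have hmem : D ∈ nhds z := hD.mem_nhds hz
  -- basic differentiability
  have Hf : ∀ q ∈ D, DifferentiableAt ℝ f q := fun q hq => diffAt_of_cd hD hf hq
  have Hξ : ∀ q ∈ D, DifferentiableAt ℝ ξ q := fun q hq => diffAt_of_cd hD hξ hq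
  have Hη : ∀ q ∈ D, DifferentiableAt ℝ η q := fun q hq => diffAt_of_cd hD hη hq
  have Hζ : ∀ q ∈ D, DifferentiableAt ℝ ζ q := fun q hq => diffAt_of_cd hD hζ hq
  have dfu : DifferentiableAt ℝ (pu f) z := diffAt_pu hD hf hz
  have dfv : DifferentiableAt ℝ (pv f) z := diffAt_pv hD hf hz
  have dxu : DifferentiableAt ℝ (pu ξ) z := diffAt_pu hD hξ hz
  have dxv : DifferentiableAt ℝ (pv ξ) z := diffAt_pv hD hξ hz
  have dyu : DifferentiableAt ℝ (pu η) z := diffAt_pu hD hη hz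
  have dyv : DifferentiableAt ℝ (pv η) z := diffAt_pv hD hη hz
  have dzu : DifferentiableAt ℝ (pu ζ) z := diffAt_pu hD hζ hz
  have dzv : DifferentiableAt ℝ (pv ζ) z := diffAt_pv hD hζ hz
  -- first derivatives of φ_t on D
  have hpuφ : ∀ (t : ℝ), ∀ q ∈ D, pu (φ t) q
      = vec3 (1 + t * pu ξ q) (t * pu η q) (pu f q + t * pu ζ q) := by
    intro t q hq
    have h1 : HasFDerivAt (fun w : ℝ × ℝ => w.1 + t * ξ w)
        (ContinuousLinearMap.fst ℝ ℝ ℝ + t • fderiv ℝ ξ q) q :=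
      hasFDerivAt_fst.add ((Hξ q hq).hasFDerivAt.const_mul t)
    have h2 : HasFDerivAt (fun w : ℝ × ℝ => w.2 + t * η w)
        (ContinuousLinearMap.snd ℝ ℝ ℝ + t • fderiv ℝ η q) q :=
      hasFDerivAt_snd.add ((Hη q hq).hasFDerivAt.const_mul t)
    have h3 : HasFDerivAt (fun w : ℝ × ℝ => f w + t * ζ w)
        (fderiv ℝ f q + t • fderiv ℝ ζ q) q :=
      (Hf q hq).hasFDerivAt.add ((Hζ q hq).hasFDerivAt.const_mul t)
    simp only [hφ]
    rw [pu_vec3 h1 h2 h3]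
    simp [pu, ContinuousLinearMap.add_apply]
  have hpvφ : ∀ (t : ℝ), ∀ q ∈ D, pv (φ t) q
      = vec3 (t * pv ξ q) (1 + t * pv η q) (pv f q + t * pv ζ q) := by
    intro t q hq
    have h1 : HasFDerivAt (fun w : ℝ × ℝ => w.1 + t * ξ w)
        (ContinuousLinearMap.fst ℝ ℝ ℝ + t • fderiv ℝ ξ q) q :=
      hasFDerivAt_fst.add ((Hξ q hq).hasFDerivAt.const_mul t)
    have h2 : HasFDerivAt (fun w : ℝ × ℝ => w.2 + t * η w)
        (ContinuousLinearMap.snd ℝ ℝ ℝ + t • fderiv ℝ η q) q :=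
      hasFDerivAt_snd.add ((Hη q hq).hasFDerivAt.const_mul t)
    have h3 : HasFDerivAt (fun w : ℝ × ℝ => f w + t * ζ w)
        (fderiv ℝ f q + t • fderiv ℝ ζ q) q :=
      (Hf q hq).hasFDerivAt.add ((Hζ q hq).hasFDerivAt.const_mul t)
    simp only [hφ]
    rw [pv_vec3 h1 h2 h3]
    simp [pv, ContinuousLinearMap.add_apply]
  -- second derivatives of φ_t at z (unsubstituted)
  have hRuu0 : ∀ t : ℝ, pu (pu (φ t)) z
      = vec3 (t * pu (pu ξ) z) (t * pu (pu η) z) (pu (pu f) z + t * pu (pu ζ) z) := by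
    intro t
    have hev : pu (φ t) =ᶠ[nhds z]
        (fun w => vec3 (1 + t * pu ξ w) (t * pu η w) (pu f w + t * pu ζ w)) := by
      filter_upwards [hmem] with q hq
      exact hpuφ t q hq
    rw [pu_congr hev]
    have h1 : HasFDerivAt (fun w => 1 + t * pu ξ w) (t • fderiv ℝ (pu ξ) z) z :=
      (dxu.hasFDerivAt.const_mul t).const_add 1
    have h2 : HasFDerivAt (fun w => t * pu η w) (t • fderiv ℝ (pu η) z) z :=
      dyu.hasFDerivAt.const_mul t
    have h3 : HasFDerivAt (fun w => pu f w + t * pu ζ w)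
        (fderiv ℝ (pu f) z + t • fderiv ℝ (pu ζ) z) z :=
      dfu.hasFDerivAt.add (dzu.hasFDerivAt.const_mul t)
    rw [pu_vec3 h1 h2 h3]
    simp [pu, ContinuousLinearMap.add_apply]
  have hRuv0 : ∀ t : ℝ, pv (pu (φ t)) z
      = vec3 (t * pv (pu ξ) z) (t * pv (pu η) z) (pv (pu f) z + t * pv (pu ζ) z) := by
    intro t
    have hev : pu (φ t) =ᶠ[nhds z]
        (fun w => vec3 (1 + t * pu ξ w) (t * pu η w) (pu f w + t * pu ζ w)) := by
      filter_upwards [hmem] with q hq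
      exact hpuφ t q hq
    rw [pv_congr hev]
    have h1 : HasFDerivAt (fun w => 1 + t * pu ξ w) (t • fderiv ℝ (pu ξ) z) z :=
      (dxu.hasFDerivAt.const_mul t).const_add 1
    have h2 : HasFDerivAt (fun w => t * pu η w) (t • fderiv ℝ (pu η) z) z :=
      dyu.hasFDerivAt.const_mul t
    have h3 : HasFDerivAt (fun w => pu f w + t * pu ζ w)
        (fderiv ℝ (pu f) z + t • fderiv ℝ (pu ζ) z) z :=
      dfu.hasFDerivAt.add (dzu.hasFDerivAt.const_mul t)
    rw [pv_vec3 h1 h2 h3]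
    simp [pv, ContinuousLinearMap.add_apply]
  have hRvv0 : ∀ t : ℝ, pv (pv (φ t)) z
      = vec3 (t * pv (pv ξ) z) (t * pv (pv η) z) (pv (pv f) z + t * pv (pv ζ) z) := by
    intro t
    have hev : pv (φ t) =ᶠ[nhds z]
        (fun w => vec3 (t * pv ξ w) (1 + t * pv η w) (pv f w + t * pv ζ w)) := by
      filter_upwards [hmem] with q hq
      exact hpvφ t q hq
    rw [pv_congr hev]
    have h1 : HasFDerivAt (fun w => t * pv ξ w) (t • fderiv ℝ (pv ξ) z) z :=
      dxv.hasFDerivAt.const_mul t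
    have h2 : HasFDerivAt (fun w => 1 + t * pv η w) (t • fderiv ℝ (pv η) z) z :=
      (dyv.hasFDerivAt.const_mul t).const_add 1
    have h3 : HasFDerivAt (fun w => pv f w + t * pv ζ w)
        (fderiv ℝ (pv f) z + t • fderiv ℝ (pv ζ) z) z :=
      dfv.hasFDerivAt.add (dzv.hasFDerivAt.const_mul t)
    rw [pv_vec3 h1 h2 h3]
    simp [pv, ContinuousLinearMap.add_apply]
  -- flex equations and their consequences
  have flex1 : ∀ q ∈ D, pu ξ q = -(pu f q * pu ζ q) := fun q hq => (hflex q hq).1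
  have flex2 : ∀ q ∈ D, pv ξ q + pu η q = -(pv f q * pu ζ q) - pu f q * pv ζ q :=
    fun q hq => (hflex q hq).2.1
  have flex3 : ∀ q ∈ D, pv η q = -(pv f q * pv ζ q) := fun q hq => (hflex q hq).2.2
  have e1 : (pu ξ) =ᶠ[nhds z] (fun w => -(pu f w * pu ζ w)) := by
    filter_upwards [hmem] with q hq
    exact flex1 q hq
  have e2 : (fun w => pv ξ w + pu η w) =ᶠ[nhds z]
      (fun w => -(pv f w * pu ζ w) - pu f w * pv ζ w) := by
    filter_upwards [hmem] with q hq
    exact flex2 q hq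
  have e3 : (pv η) =ᶠ[nhds z] (fun w => -(pv f w * pv ζ w)) := by
    filter_upwards [hmem] with q hq
    exact flex3 q hq
  have hsξ : pu (pv ξ) z = pv (pu ξ) z := mixed_symm hD hξ hz
  have hsη : pu (pv η) z = pv (pu η) z := mixed_symm hD hη hz
  have hsf : pu (pv f) z = pv (pu f) z := mixed_symm hD hf hz
  have hsζ : pu (pv ζ) z = pv (pu ζ) z := mixed_symm hD hζ hz
  -- second-order consequences of the flex equations
  have hxuu : pu (pu ξ) z = -(pu (pu f) z * pu ζ z + pu f z * pu (pu ζ) z) := by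
    rw [pu_congr e1, pu_neg_mul dfu dzu]
  have hxuv : pv (pu ξ) z = -(pv (pu f) z * pu ζ z + pu f z * pv (pu ζ) z) := by
    rw [pv_congr e1, pv_neg_mul dfu dzu]
  have hyvv : pv (pv η) z = -(pv (pv f) z * pv ζ z + pv f z * pv (pv ζ) z) := by
    rw [pv_congr e3, pv_neg_mul dfv dzv]
  have hyuv : pv (pu η) z = -(pv (pu f) z * pv ζ z + pv f z * pv (pu ζ) z) := by
    rw [← hsη, pu_congr e3, pu_neg_mul dfv dzv, hsf, hsζ]
  have E2u : pu (pv ξ) z + pu (pu η) z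
      = -(pu (pv f) z * pu ζ z + pv f z * pu (pu ζ) z)
        - (pu (pu f) z * pv ζ z + pu f z * pu (pv ζ) z) :=
    (pu_add' dxv dyu).symm.trans ((pu_congr e2).trans (pu_neg_mul_sub dfv dzu dfu dzv))
  have E2v : pv (pv ξ) z + pv (pu η) z
      = -(pv (pv f) z * pu ζ z + pv f z * pv (pu ζ) z)
        - (pv (pu f) z * pv ζ z + pu f z * pv (pv ζ) z) :=
    (pv_add' dxv dyu).symm.trans ((pv_congr e2).trans (pv_neg_mul_sub dfv dzu dfu dzv))
  have hyuu : pu (pu η) z = -(pv f z * pu (pu ζ) z + pu (pu f) z * pv ζ z) := by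
    linear_combination E2u - hsξ - hxuv - (pu ζ z) * hsf - (pu f z) * hsζ
  have hxvv : pv (pv ξ) z = -(pv (pv f) z * pu ζ z + pu f z * pv (pv ζ) z) := by
    linear_combination E2v - hyuv
  -- first-order values at z
  have hxu : pu ξ z = -(pu f z * pu ζ z) := flex1 z hz
  have hyv : pv η z = -(pv f z * pv ζ z) := flex3 z hz
  have hxv : pv ξ z = -(pv f z * pu ζ z) - pu f z * pv ζ z - pu η z := by
    linear_combination flex2 z hz
  -- the fully substituted first and second derivatives at z
  have hA : ∀ t : ℝ, pu (φ t) z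
      = vec3 (1 + t * -(pu f z * pu ζ z)) (t * pu η z) (pu f z + t * pu ζ z) := by
    intro t
    rw [hpuφ t z hz, hxu]
  have hB : ∀ t : ℝ, pv (φ t) z
      = vec3 (t * (-(pv f z * pu ζ z) - pu f z * pv ζ z - pu η z))
          (1 + t * -(pv f z * pv ζ z)) (pv f z + t * pv ζ z) := by
    intro t
    rw [hpvφ t z hz, hxv, hyv]
  have hRuu : ∀ t : ℝ, pu (pu (φ t)) z
      = vec3 (t * -(pu (pu f) z * pu ζ z + pu f z * pu (pu ζ) z))
          (t * -(pv f z * pu (pu ζ) z + pu (pu f) z * pv ζ z))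
          (pu (pu f) z + t * pu (pu ζ) z) := by
    intro t
    rw [hRuu0 t, hxuu, hyuu]
  have hRuv : ∀ t : ℝ, pv (pu (φ t)) z
      = vec3 (t * -(pv (pu f) z * pu ζ z + pu f z * pv (pu ζ) z))
          (t * -(pv (pu f) z * pv ζ z + pv f z * pv (pu ζ) z))
          (pv (pu f) z + t * pv (pu ζ) z) := by
    intro t
    rw [hRuv0 t, hxuv, hyuv]
  have hRvv : ∀ t : ℝ, pv (pv (φ t)) z
      = vec3 (t * -(pv (pv f) z * pu ζ z + pu f z * pv (pv ζ) z))
          (t * -(pv (pv f) z * pv ζ z + pv f z * pv (pv ζ) z))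
          (pv (pv f) z + t * pv (pv ζ) z) := by
    intro t
    rw [hRvv0 t, hxvv, hyvv]
  -- the explicit rational formula for h z t
  have key : (fun t => h z t) = (fun t : ℝ => (((pv (pv f) z) + (pu (pu f) z) + (pv f z)^2 * (pu (pu f) z) + (-2) * (pu f z) * (pv f z) * (pv (pu f) z) + (pu f z)^2 * (pv (pv f) z)) + ((pv (pv ζ) z) + (pu (pu ζ) z) + (pv f z)^2 * (pv (pv ζ) z) + 2 * (pv f z)^2 * (pu (pu ζ) z) + (pv f z)^4 * (pu (pu ζ) z) + (-2) * (pu f z) * (pv f z) * (pv (pu ζ) z) + (-2) * (pu f z) * (pv f z)^3 * (pv (pu ζ) z) + 2 * (pu f z)^2 * (pv (pv ζ) z) + (pu f z)^2 * (pu (pu ζ) z) + (pu f z)^2 * (pv f z)^2 * (pv (pv ζ) z) + (pu f z)^2 * (pv f z)^2 * (pu (pu ζ) z) + (-2) * (pu f z)^3 * (pv f z) * (pv (pu ζ) z) + (pu f z)^4 * (pv (pv ζ) z)) * t + (2 * (pv (pv f) z) * (pu η z)^2 + (pv (pv f) z) * (pv ζ z)^2 + 2 * (pv (pv f) z) * (pu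 ζ z)^2 + (-2) * (pv (pu f) z) * (pu ζ z) * (pv ζ z) + 2 * (pu (pu f) z) * (pu η z)^2 + 2 * (pu (pu f) z) * (pv ζ z)^2 + (pu (pu f) z) * (pu ζ z)^2 + 2 * (pv f z) * (pv (pu f) z) * (pv ζ z) * (pu η z) + 2 * (pv f z) * (pu (pu f) z) * (pu ζ z) * (pu η z) + (pv f z)^2 * (pu (pu f) z) * (pu η z)^2 + 2 * (pv f z)^2 * (pu (pu f) z) * (pv ζ z)^2 + 2 * (pv f z)^2 * (pu (pu f) z) * (pu ζ z)^2 + 2 * (pu f z) * (pv (pv f) z) * (pv ζ z) * (pu η z) + (-2) * (pu f z) * (pv (pu f) z) * (pu ζ z) * (pu η z) + 4 * (pu f z) * (pu (pu f) z) * (pv ζ z) * (pu η z) + (-2) * (pu f z) * (pv f z) * (pv (pu f) z) * (pu η z)^2 + (-2) * (pu f z) * (pv f z) * (pv (pu f) z) * (pv ζ z)^2 + (-4) * (pu f z) * (pv f z) * (pv (pu f) z) * (pu ζ z)^2 + 2 * (pu f z) * (pv f z) * (pu (pu f) z) * (pu ζ z) * (pv ζ z) + 2 * (pu f z) * (pv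 f z)^2 * (pu (pu f) z) * (pv ζ z) * (pu η z) + (pu f z)^2 * (pv (pv f) z) * (pu η z)^2 + 2 * (pu f z)^2 * (pv (pv f) z) * (pv ζ z)^2 + 2 * (pu f z)^2 * (pv (pv f) z) * (pu ζ z)^2 + (-2) * (pu f z)^2 * (pv (pu f) z) * (pu ζ z) * (pv ζ z) + 2 * (pu f z)^2 * (pu (pu f) z) * (pv ζ z)^2 + (-4) * (pu f z)^2 * (pv f z) * (pv (pu f) z) * (pv ζ z) * (pu η z) + (pu f z)^2 * (pv f z)^2 * (pu (pu f) z) * (pv ζ z)^2 + 2 * (pu f z)^3 * (pv (pv f) z) * (pv ζ z) * (pu η z) + (-2) * (pu f z)^3 * (pv f z) * (pv (pu f) z) * (pv ζ z)^2 + (pu f z)^4 * (pv (pv f) z) * (pv ζ z)^2) * t^2 + (2 * (pv (pv ζ) z) * (pu η z)^2 + 2 * (pu (pu ζ) z) * (pu η z)^2 + (pv ζ z)^2 * (pu (pu ζ) z) + (-2) * (pu ζ z) * (pv ζ z) * (pv (pu ζ) z) + (pu ζ z)^2 * (pv (pv ζ) z) + 2 * (pv f z) * (pv ζ z) * (pv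 (pu ζ) z) * (pu η z) + 2 * (pv f z) * (pu ζ z) * (pv (pv ζ) z) * (pu η z) + 4 * (pv f z) * (pu ζ z) * (pu (pu ζ) z) * (pu η z) + (pv f z)^2 * (pv (pv ζ) z) * (pu η z)^2 + 2 * (pv f z)^2 * (pu (pu ζ) z) * (pu η z)^2 + 2 * (pv f z)^2 * (pv ζ z)^2 * (pu (pu ζ) z) + (-2) * (pv f z)^2 * (pu ζ z) * (pv ζ z) * (pv (pu ζ) z) + 2 * (pv f z)^2 * (pu ζ z)^2 * (pv (pv ζ) z) + 2 * (pv f z)^2 * (pu ζ z)^2 * (pu (pu ζ) z) + 2 * (pv f z)^3 * (pv ζ z) * (pv (pu ζ) z) * (pu η z) + 4 * (pv f z)^3 * (pu ζ z) * (pu (pu ζ) z) * (pu η z) + (pv f z)^4 * (pv ζ z)^2 * (pu (pu ζ) z) + 2 * (pv f z)^4 * (pu ζ z)^2 * (pu (pu ζ) z) + 2 * (pu f z) * (pv ζ z) * (pu (pu ζ) z) * (pu η z) + (-2) * (pu f z) * (pu ζ z) * (pv (pu ζ) z) * (pu η z) + (-2) * (pu f z) * (pv f z) * (pv (pu ζ)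 z) * (pu η z)^2 + 2 * (pu f z) * (pv f z) * (pu ζ z) * (pv ζ z) * (pu (pu ζ) z) + (-2) * (pu f z) * (pv f z) * (pu ζ z)^2 * (pv (pu ζ) z) + 2 * (pu f z) * (pv f z)^2 * (pv ζ z) * (pu (pu ζ) z) * (pu η z) + (-6) * (pu f z) * (pv f z)^2 * (pu ζ z) * (pv (pu ζ) z) * (pu η z) + 2 * (pu f z) * (pv f z)^3 * (pu ζ z) * (pv ζ z) * (pu (pu ζ) z) + (-4) * (pu f z) * (pv f z)^3 * (pu ζ z)^2 * (pv (pu ζ) z) + 2 * (pu f z)^2 * (pv (pv ζ) z) * (pu η z)^2 + (pu f z)^2 * (pu (pu ζ) z) * (pu η z)^2 + 2 * (pu f z)^2 * (pv ζ z)^2 * (pu (pu ζ) z) + (-4) * (pu f z)^2 * (pu ζ z) * (pv ζ z) * (pv (pu ζ) z) + 2 * (pu f z)^2 * (pu ζ z)^2 * (pv (pv ζ) z) + 2 * (pu f z)^2 * (pv f z) * (pv ζ z) * (pv (pu ζ) z) * (pu η z) + 2 * (pu f z)^2 * (pv f z) * (pu ζ z) * (pv (pv ζ) z) * (pu η z)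 + 2 * (pu f z)^2 * (pv f z) * (pu ζ z) * (pu (pu ζ) z) * (pu η z) + 2 * (pu f z)^2 * (pv f z)^2 * (pv ζ z)^2 * (pu (pu ζ) z) + (-2) * (pu f z)^2 * (pv f z)^2 * (pu ζ z) * (pv ζ z) * (pv (pu ζ) z) + 2 * (pu f z)^2 * (pv f z)^2 * (pu ζ z)^2 * (pv (pv ζ) z) + (pu f z)^2 * (pv f z)^2 * (pu ζ z)^2 * (pu (pu ζ) z) + 2 * (pu f z)^3 * (pv ζ z) * (pu (pu ζ) z) * (pu η z) + (-2) * (pu f z)^3 * (pu ζ z) * (pv (pu ζ) z) * (pu η z) + 2 * (pu f z)^3 * (pv f z) * (pu ζ z) * (pv ζ z) * (pu (pu ζ) z) + (-2) * (pu f z)^3 * (pv f z) * (pu ζ z)^2 * (pv (pu ζ) z) + (pu f z)^4 * (pv ζ z)^2 * (pu (pu ζ) z) + (-2) * (pu f z)^4 * (pu ζ z) * (pv ζ z) * (pv (pu ζ) z) + (pu f z)^4 * (pu ζ z)^2 * (pv (pv ζ) z)) * t^3 + ((pv (pv f) z) * (pu η z)^4 + (pv (pv f) z) * (pv ζ z)^2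 * (pu η z)^2 + 2 * (pv (pv f) z) * (pu ζ z)^2 * (pu η z)^2 + (pv (pv f) z) * (pu ζ z)^2 * (pv ζ z)^2 + (pv (pv f) z) * (pu ζ z)^4 + (-2) * (pv (pu f) z) * (pu ζ z) * (pv ζ z) * (pu η z)^2 + (-2) * (pv (pu f) z) * (pu ζ z) * (pv ζ z)^3 + (-2) * (pv (pu f) z) * (pu ζ z)^3 * (pv ζ z) + (pu (pu f) z) * (pu η z)^4 + 2 * (pu (pu f) z) * (pv ζ z)^2 * (pu η z)^2 + (pu (pu f) z) * (pv ζ z)^4 + (pu (pu f) z) * (pu ζ z)^2 * (pu η z)^2 + (pu (pu f) z) * (pu ζ z)^2 * (pv ζ z)^2 + 2 * (pv f z) * (pv (pu f) z) * (pv ζ z) * (pu η z)^3 + 2 * (pv f z) * (pv (pu f) z) * (pv ζ z)^3 * (pu η z) + 2 * (pv f z) * (pv (pu f) z) * (pu ζ z)^2 * (pv ζ z) * (pu η z) + 2 * (pv f z) * (pu (pu f) z) * (pu ζ z) * (pu η z)^3 + 2 * (pv f z) * (pu (pu f) z) * (pu ζ z) * (pv ζ z)^2 * (pu η z) + 2 *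 (pv f z) * (pu (pu f) z) * (pu ζ z)^3 * (pu η z) + (pv f z)^2 * (pu (pu f) z) * (pv ζ z)^2 * (pu η z)^2 + (pv f z)^2 * (pu (pu f) z) * (pv ζ z)^4 + (pv f z)^2 * (pu (pu f) z) * (pu ζ z)^2 * (pu η z)^2 + 2 * (pv f z)^2 * (pu (pu f) z) * (pu ζ z)^2 * (pv ζ z)^2 + (pv f z)^2 * (pu (pu f) z) * (pu ζ z)^4 + 2 * (pu f z) * (pv (pv f) z) * (pv ζ z) * (pu η z)^3 + 2 * (pu f z) * (pv (pv f) z) * (pu ζ z)^2 * (pv ζ z) * (pu η z) + (-2) * (pu f z) * (pv (pu f) z) * (pu ζ z) * (pu η z)^3 + (-6) * (pu f z) * (pv (pu f) z) * (pu ζ z) * (pv ζ z)^2 * (pu η z) + (-2) * (pu f z) * (pv (pu f) z) * (pu ζ z)^3 * (pu η z) + 4 * (pu f z) * (pu (pu f) z) * (pv ζ z) * (pu η z)^3 + 4 * (pu f z) * (pu (pu f) z) * (pv ζ z)^3 * (pu η z) + 2 * (pu f z) * (pu (pu f) z) * (pu ζ z)^2 * (pv ζ z) * (pu η z) + 4 *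 (pu f z) * (pv f z) * (pv (pu f) z) * (pv ζ z)^2 * (pu η z)^2 + (-2) * (pu f z) * (pv f z) * (pv (pu f) z) * (pu ζ z)^2 * (pu η z)^2 + (-2) * (pu f z) * (pv f z) * (pv (pu f) z) * (pu ζ z)^2 * (pv ζ z)^2 + (-2) * (pu f z) * (pv f z) * (pv (pu f) z) * (pu ζ z)^4 + 6 * (pu f z) * (pv f z) * (pu (pu f) z) * (pu ζ z) * (pv ζ z) * (pu η z)^2 + 2 * (pu f z) * (pv f z) * (pu (pu f) z) * (pu ζ z) * (pv ζ z)^3 + 2 * (pu f z) * (pv f z) * (pu (pu f) z) * (pu ζ z)^3 * (pv ζ z) + 2 * (pu f z) * (pv f z)^2 * (pu (pu f) z) * (pv ζ z)^3 * (pu η z) + 2 * (pu f z) * (pv f z)^2 * (pu (pu f) z) * (pu ζ z)^2 * (pv ζ z) * (pu η z) + (pu f z)^2 * (pv (pv f) z) * (pv ζ z)^2 * (pu η z)^2 + (pu f z)^2 * (pv (pv f) z) * (pu ζ z)^2 * (pu η z)^2 + 2 * (pu f z)^2 * (pv (pv f) z) * (pu ζ z)^2 * (pv ζ z)^2 + (pu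 f z)^2 * (pv (pv f) z) * (pu ζ z)^4 + (-6) * (pu f z)^2 * (pv (pu f) z) * (pu ζ z) * (pv ζ z) * (pu η z)^2 + (-4) * (pu f z)^2 * (pv (pu f) z) * (pu ζ z) * (pv ζ z)^3 + (-2) * (pu f z)^2 * (pv (pu f) z) * (pu ζ z)^3 * (pv ζ z) + 6 * (pu f z)^2 * (pu (pu f) z) * (pv ζ z)^2 * (pu η z)^2 + 2 * (pu f z)^2 * (pu (pu f) z) * (pv ζ z)^4 + (pu f z)^2 * (pu (pu f) z) * (pu ζ z)^2 * (pv ζ z)^2 + 2 * (pu f z)^2 * (pv f z) * (pv (pu f) z) * (pv ζ z)^3 * (pu η z) + (-4) * (pu f z)^2 * (pv f z) * (pv (pu f) z) * (pu ζ z)^2 * (pv ζ z) * (pu η z) + 6 * (pu f z)^2 * (pv f z) * (pu (pu f) z) * (pu ζ z) * (pv ζ z)^2 * (pu η z) + (pu f z)^2 * (pv f z)^2 * (pu (pu f) z) * (pv ζ z)^4 + (pu f z)^2 * (pv f z)^2 * (pu (pu f) z) * (pu ζ z)^2 * (pv ζ z)^2 + 2 * (pu f z)^3 * (pv (pv f)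 z) * (pu ζ z)^2 * (pv ζ z) * (pu η z) + (-6) * (pu f z)^3 * (pv (pu f) z) * (pu ζ z) * (pv ζ z)^2 * (pu η z) + 4 * (pu f z)^3 * (pu (pu f) z) * (pv ζ z)^3 * (pu η z) + (-2) * (pu f z)^3 * (pv f z) * (pv (pu f) z) * (pu ζ z)^2 * (pv ζ z)^2 + 2 * (pu f z)^3 * (pv f z) * (pu (pu f) z) * (pu ζ z) * (pv ζ z)^3 + (pu f z)^4 * (pv (pv f) z) * (pu ζ z)^2 * (pv ζ z)^2 + (-2) * (pu f z)^4 * (pv (pu f) z) * (pu ζ z) * (pv ζ z)^3 + (pu f z)^4 * (pu (pu f) z) * (pv ζ z)^4) * t^4 + ((pv (pv ζ) z) * (pu η z)^4 + (pu (pu ζ) z) * (pu η z)^4 + (pv ζ z)^2 * (pu (pu ζ) z) * (pu η z)^2 + (-2) * (pu ζ z) * (pv ζ z) * (pv (pu ζ) z) * (pu η z)^2 + (pu ζ z)^2 * (pv (pv ζ) z) * (pu η z)^2 + 2 * (pv f z) * (pv ζ z) * (pv (pu ζ) z) * (pu η z)^3 + 2 * (pv f z) * (pu ζ z) * (pv (pv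 ζ) z) * (pu η z)^3 + 4 * (pv f z) * (pu ζ z) * (pu (pu ζ) z) * (pu η z)^3 + 2 * (pv f z) * (pu ζ z) * (pv ζ z)^2 * (pu (pu ζ) z) * (pu η z) + (-4) * (pv f z) * (pu ζ z)^2 * (pv ζ z) * (pv (pu ζ) z) * (pu η z) + 2 * (pv f z) * (pu ζ z)^3 * (pv (pv ζ) z) * (pu η z) + (pv f z)^2 * (pv ζ z)^2 * (pu (pu ζ) z) * (pu η z)^2 + 4 * (pv f z)^2 * (pu ζ z) * (pv ζ z) * (pv (pu ζ) z) * (pu η z)^2 + (pv f z)^2 * (pu ζ z)^2 * (pv (pv ζ) z) * (pu η z)^2 + 6 * (pv f z)^2 * (pu ζ z)^2 * (pu (pu ζ) z) * (pu η z)^2 + (pv f z)^2 * (pu ζ z)^2 * (pv ζ z)^2 * (pu (pu ζ) z) + (-2) * (pv f z)^2 * (pu ζ z)^3 * (pv ζ z) * (pv (pu ζ) z) + (pv f z)^2 * (pu ζ z)^4 * (pv (pv ζ) z) + 2 * (pv f z)^3 * (pu ζ z) * (pv ζ z)^2 * (pu (pu ζ) z) * (pu η z) + 2 * (pv f z)^3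 * (pu ζ z)^2 * (pv ζ z) * (pv (pu ζ) z) * (pu η z) + 4 * (pv f z)^3 * (pu ζ z)^3 * (pu (pu ζ) z) * (pu η z) + (pv f z)^4 * (pu ζ z)^2 * (pv ζ z)^2 * (pu (pu ζ) z) + (pv f z)^4 * (pu ζ z)^4 * (pu (pu ζ) z) + 2 * (pu f z) * (pv ζ z) * (pu (pu ζ) z) * (pu η z)^3 + (-2) * (pu f z) * (pu ζ z) * (pv (pu ζ) z) * (pu η z)^3 + 6 * (pu f z) * (pv f z) * (pu ζ z) * (pv ζ z) * (pu (pu ζ) z) * (pu η z)^2 + (-6) * (pu f z) * (pv f z) * (pu ζ z)^2 * (pv (pu ζ) z) * (pu η z)^2 + 6 * (pu f z) * (pv f z)^2 * (pu ζ z)^2 * (pv ζ z) * (pu (pu ζ) z) * (pu η z) + (-6) * (pu f z) * (pv f z)^2 * (pu ζ z)^3 * (pv (pu ζ) z) * (pu η z) + 2 * (pu f z) * (pv f z)^3 * (pu ζ z)^3 * (pv ζ z) * (pu (pu ζ) z) + (-2) * (pu f z) * (pv f z)^3 * (pu ζ z)^4 * (pv (pu ζ) z) + (pu f z)^2 * (pv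 ζ z)^2 * (pu (pu ζ) z) * (pu η z)^2 + (-2) * (pu f z)^2 * (pu ζ z) * (pv ζ z) * (pv (pu ζ) z) * (pu η z)^2 + (pu f z)^2 * (pu ζ z)^2 * (pv (pv ζ) z) * (pu η z)^2 + 2 * (pu f z)^2 * (pv f z) * (pu ζ z) * (pv ζ z)^2 * (pu (pu ζ) z) * (pu η z) + (-4) * (pu f z)^2 * (pv f z) * (pu ζ z)^2 * (pv ζ z) * (pv (pu ζ) z) * (pu η z) + 2 * (pu f z)^2 * (pv f z) * (pu ζ z)^3 * (pv (pv ζ) z) * (pu η z) + (pu f z)^2 * (pv f z)^2 * (pu ζ z)^2 * (pv ζ z)^2 * (pu (pu ζ) z) + (-2) * (pu f z)^2 * (pv f z)^2 * (pu ζ z)^3 * (pv ζ z) * (pv (pu ζ) z) + (pu f z)^2 * (pv f z)^2 * (pu ζ z)^4 * (pv (pv ζ) z)) * t^5) / ((1 + (pv f z)^2 + (pu f z)^2) + (2 * (pu η z)^2 + (pv ζ z)^2 + (pu ζ z)^2 + 2 * (pv f z) * (pu ζ z) * (pu η z) + (pv f z)^2 * (pu η z)^2 + (pv f z)^2 * (pv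 ζ z)^2 + 2 * (pv f z)^2 * (pu ζ z)^2 + 2 * (pu f z) * (pv ζ z) * (pu η z) + 2 * (pu f z) * (pv f z)^2 * (pv ζ z) * (pu η z) + (pu f z)^2 * (pu η z)^2 + 2 * (pu f z)^2 * (pv ζ z)^2 + (pu f z)^2 * (pu ζ z)^2 + (pu f z)^2 * (pv f z)^2 * (pv ζ z)^2 + 2 * (pu f z)^3 * (pv ζ z) * (pu η z) + (pu f z)^4 * (pv ζ z)^2) * t^2 + ((pu η z)^4 + (pv ζ z)^2 * (pu η z)^2 + (pu ζ z)^2 * (pu η z)^2 + 2 * (pv f z) * (pu ζ z) * (pu η z)^3 + 2 * (pv f z) * (pu ζ z) * (pv ζ z)^2 * (pu η z) + 2 * (pv f z) * (pu ζ z)^3 * (pu η z) + (pv f z)^2 * (pu ζ z)^2 * (pu η z)^2 + (pv f z)^2 * (pu ζ z)^2 * (pv ζ z)^2 + (pv f z)^2 * (pu ζ z)^4 + 2 * (pu f z) * (pv ζ z) * (pu η z)^3 + 4 * (pu f z) * (pv f z) * (pu ζ z) * (pv ζ z) * (pu η z)^2 + 2 * (pu f z) * (pv f z)^2 * (pu ζ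 z)^2 * (pv ζ z) * (pu η z) + (pu f z)^2 * (pv ζ z)^2 * (pu η z)^2 + 2 * (pu f z)^2 * (pv f z) * (pu ζ z) * (pv ζ z)^2 * (pu η z) + (pu f z)^2 * (pv f z)^2 * (pu ζ z)^2 * (pv ζ z)^2) * t^4)) := by
    funext t
    simp only [hh, hn]
    rw [hA t, hB t, hRvv t, hRuv t, hRuu t]
    rw [mean_curv_formula]
    congr 1 <;> ring
  rw [key]
  refine deriv_ratio _ _ _ _ _ _ _ _ _ _ ?_ ?_
  · positivity
  · rw [eq_div_iff (by positivity)]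
    ring
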